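/- The single-attribute query chain is irreducible: for all states s, s' ∈ Fin Δmax × U there exists n ≥ 1 such that the n-step transition probability from s to s' is positive. -/
import Mathlib


open scoped Classical

/-- Age-of-information increment: ages are `1,…,Δmax`, encoded by `Fin Δmax` (value `i` encodes
age `i+1`); the new age is `min (age + 1) Δmax`. -/
def ageSucc {Δmax : ℕ} (hΔ : 2 ≤ Δmax) (δ : Fin Δmax) : Fin Δmax :=
  ⟨min (δ.val + 1) (Δmax - 1), by have := δ.isLt; omega⟩

/-- One-step transition probabilities of the single-attribute query chain on
`Fin Δmax × U`: from `(δ, u)`, move to `(age 1, ν)` with probability `q · P ν` for each `ν ∈ U`,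
and move to `(min (δ + 1) Δmax, u)` with probability `1 − q`. -/
noncomputable def oneStep {Δmax : ℕ} (hΔ : 2 ≤ Δmax) {U : Type*}
    (q : ℝ) (P : U → ℝ) (s s' : Fin Δmax × U) : ℝ :=
  (if s'.1 = (⟨0, by omega⟩ : Fin Δmax) then q * P s'.2 else 0) +
  (if s' = (ageSucc hΔ s.1, s.2) then 1 - q else 0)

/-- `n`-step transition probabilities: the sum over all length-`n` paths from `s` to `s'` of the
products of one-step probabilities (via the Chapman–Kolmogorov recursion). -/
noncomputable def nStep {Δmax : ℕ} (hΔ : 2 ≤ Δmax) {U : Type*} [Fintype U]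
    (q : ℝ) (P : U → ℝ) : ℕ → (Fin Δmax × U) → (Fin Δmax × U) → ℝ
  | 0 => fun s s' => if s = s' then 1 else 0
  | n + 1 => fun s s' => ∑ t, oneStep hΔ q P s t * nStep hΔ q P n t s'

/-- The single-attribute query chain is irreducible: for all states `s, s'` there exists `n ≥ 1`
such that the `n`-step transition probability from `s` to `s'` is positive. -/
theorem single_attribute_chain_irreducible {Δmax : ℕ} (hΔ : 2 ≤ Δmax)
    {U : Type*} [Fintype U] [Nonempty U]
    (P : U → ℝ) (hP : ∀ ν, 0 < P ν) (hPsum : ∑ ν, P ν = 1)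
    (q : ℝ) (hq0 : 0 < q) (hq1 : q < 1) :
    ∀ s s' : Fin Δmax × U, ∃ n : ℕ, 1 ≤ n ∧ 0 < nStep hΔ q P n s s' := by
  have honeNonneg : ∀ s t : Fin Δmax × U, 0 ≤ oneStep hΔ q P s t := by
    intro s t
    unfold oneStep
    have h1 : 0 ≤ q * P t.2 := le_of_lt (mul_pos hq0 (hP t.2))
    have h2 : 0 ≤ 1 - q := by linarith
    apply add_nonneg <;> split <;> simp [h1, h2]
  have hnNonneg : ∀ n (s t : Fin Δmax × U), 0 ≤ nStep hΔ q P n s t := by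
    intro n
    induction n with
    | zero => intro s t; simp only [nStep]; split <;> norm_num
    | succ n ih =>
      intro s t
      simp only [nStep]
      exact Finset.sum_nonneg fun u _ => mul_nonneg (honeNonneg _ _) (ih _ _)
  -- step lemma
  have hstep : ∀ n (s t s' : Fin Δmax × U),
      0 < oneStep hΔ q P s t → 0 < nStep hΔ q P n t s' →
      0 < nStep hΔ q P (n + 1) s s' := by
    intro n s t s' h1 h2
    simp only [nStep]
    have : (0:ℝ) < oneStep hΔ q P s t * nStep hΔ q P n t s' := mul_pos h1 h2
    refine lt_of_lt_of_le this ?_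
    exact Finset.single_le_sum (f := fun u => oneStep hΔ q P s u * nStep hΔ q P n u s')
      (fun u _ => mul_nonneg (honeNonneg _ _) (hnNonneg _ _ _)) (Finset.mem_univ t)
  -- walk along ages
  have hwalk : ∀ (k j : ℕ) (h : j + k < Δmax) (u : U),
      0 < nStep hΔ q P k (⟨j, by omega⟩, u) (⟨j + k, h⟩, u) := by
    intro k
    induction k with
    | zero => intro j h u; simp [nStep]
    | succ k ih =>
      intro j h u
      refine hstep k _ (⟨j + 1, by omega⟩, u) _ ?_ ?_
      · unfold oneStep ageSucc
        have hne : (⟨j + 1, by omega⟩ : Fin Δmax) ≠ ⟨0, by omega⟩ := by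
          simp [Fin.ext_iff]
        have hmin : min (j + 1) (Δmax - 1) = j + 1 := by omega
        simp only [hne, if_neg, if_pos]
        rw [if_neg (by simpa using hne), if_pos (by simp [Fin.ext_iff, hmin])]
        linarith
      · have hk : (⟨j + (k + 1), h⟩ : Fin Δmax) = ⟨(j + 1) + k, by omega⟩ := by
          simp only [Fin.mk.injEq]; omega
        rw [hk]
        exact ih (j + 1) (by omega) u
  intro s s'
  refine ⟨s'.1.val + 1, by omega, ?_⟩
  have h1 : 0 < oneStep hΔ q P s (⟨0, by omega⟩, s'.2) := by
    unfold oneStep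
    have h1 : 0 < q * P s'.2 := mul_pos hq0 (hP s'.2)
    have h2 : 0 ≤ 1 - q := by linarith
    rw [if_pos rfl]
    split <;> linarith
  have h2 : 0 < nStep hΔ q P s'.1.val (⟨0, by omega⟩, s'.2) s' := by
    have := hwalk s'.1.val 0 (by simpa using s'.1.isLt) s'.2
    convert this using 2
    ext <;> simp
  exact hstep s'.1.val s (⟨0, by omega⟩, s'.2) s' h1 h2
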